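/- In the setting of a symmetric exchangeable (n+1)×(n+1) matrix A with row-conditionally symmetric nonconformity scores S_{n+1;j}, define the full conformal prediction set ℐ_{n+1;n} = { z : there exists a fill-in matrix Z with Z_{n+1,n} = z such that S_{n+1;n}(Ã(Z)) ≤ Q_{1-α}( (1/n) ∑_{j=1}^n δ_{S_{n+1;j}(Ã(Z))} ) }, where Ã(Z) replaces the missing entries of A (as indicated by the mask M) with the corresponding entries of Z. Then for every u ∈ [0,1], P(A_{n+1,n} ∈ ℐ_{n+1;n} | ξ_{n+1} = u) ≥ 1 - α. -/

import Mathlib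

open MeasureTheory ProbabilityTheory Finset

/-- The `k`-th smallest value (1-indexed, clamped to valid range) of `x`. -/
noncomputable def orderStat {n : ℕ} [NeZero n] (k : ℕ) (x : Fin n → ℝ) : ℝ :=
  x (Tuple.sort x ⟨min (k - 1) (n - 1), by
    have h := Nat.pos_of_ne_zero (NeZero.ne n); omega⟩)

/-- The lower `β`-quantile of the empirical distribution `(1/n) ∑ δ_{x j}`,
i.e. the `⌈β n⌉`-th smallest of the `x j`. -/
noncomputable def empQuantile {n : ℕ} [NeZero n] (β : ℝ) (x : Fin n → ℝ) : ℝ :=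
  orderStat ⌈β * n⌉₊ x
instance matrixMeasurableSpace {m k : Type*} [Fintype m] [Fintype k] :
    MeasurableSpace (Matrix m k ℝ) :=
  (inferInstance : MeasurableSpace (m → k → ℝ))
/-- Extension of a permutation of `Fin n` to `Fin (n+1)` fixing the last index. -/
def permExt {n : ℕ} (π : Equiv.Perm (Fin n)) (i : Fin (n + 1)) : Fin (n + 1) :=
  if h : (i : ℕ) < n then Fin.castSucc (π ⟨i, h⟩) else i

/-- `𝒜_{π,π}`: permute the first `n` rows and columns of an `(n+1)×(n+1)` matrix by
`π`, leaving index `n+1` fixed; `(𝒜_{π,π})_{i,j} = 𝒜_{π⁻¹(i), π⁻¹(j)}`. -/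
def matPerm {n : ℕ} (π : Equiv.Perm (Fin n))
    (A : Matrix (Fin (n + 1)) (Fin (n + 1)) ℝ) : Matrix (Fin (n + 1)) (Fin (n + 1)) ℝ :=
  fun i j => A (permExt π⁻¹ i) (permExt π⁻¹ j)
/-- Conditional probability of `s` given `ξ` (as a conditional expectation of the
indicator). -/
noncomputable def condProb {Ω : Type*} [MeasurableSpace Ω] (P : Measure Ω)
    (ξ : Ω → ℝ) (s : Set Ω) : Ω → ℝ :=
  P[s.indicator (fun _ => (1 : ℝ)) | MeasurableSpace.comap ξ inferInstance]

/-- Target row index `n+1` (the last row) of the `(n+2)×(n+2)` matrix. -/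
def rT (n : ℕ) : Fin (n + 2) := Fin.last (n + 1)

/-- Target column index `n` of the `(n+2)×(n+2)` matrix. -/
def cT (n : ℕ) : Fin (n + 2) := Fin.castSucc (Fin.last n)

/-- `Ã(Z) := A ∘ (1-M) + Z ∘ M`: fill the missing entries (where `M` is `true`)
of `A` with the corresponding entries of `Z`. -/
def fillIn {n : ℕ} (M : Matrix (Fin (n + 2)) (Fin (n + 2)) Bool)
    (A Z : Matrix (Fin (n + 2)) (Fin (n + 2)) ℝ) : Matrix (Fin (n + 2)) (Fin (n + 2)) ℝ :=
  fun i j => if M i j then Z i j else A i j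

/-- `Ã(Z; z)`: fill missing entries with `Z`, except that the target entry
`(n+1, n)` (and its symmetric counterpart `(n, n+1)`) is set to `z`. -/
def fillZ {n : ℕ} (M : Matrix (Fin (n + 2)) (Fin (n + 2)) Bool)
    (A Z : Matrix (Fin (n + 2)) (Fin (n + 2)) ℝ) (z : ℝ) :
    Matrix (Fin (n + 2)) (Fin (n + 2)) ℝ :=
  fun i j =>
    if (i = rT n ∧ j = cT n) ∨ (i = cT n ∧ j = rT n) then z
    else if M i j then Z i j else A i j

/-- The full conformal prediction set `ℐ_{n+1;n}`: all `z` for which some fill-in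
matrix `Z` with `Z_{n+1,n} = z` makes the target score at most the lower
`(1-α)`-quantile of the empirical score distribution. -/
noncomputable def fullConfSet {n : ℕ} (α : ℝ)
    (M : Matrix (Fin (n + 2)) (Fin (n + 2)) Bool)
    (S : Fin (n + 1) → Matrix (Fin (n + 2)) (Fin (n + 2)) ℝ → ℝ)
    (A : Matrix (Fin (n + 2)) (Fin (n + 2)) ℝ) : Set ℝ :=
  {z | ∃ Z : Matrix (Fin (n + 2)) (Fin (n + 2)) ℝ, Z (rT n) (cT n) = z ∧
    S (Fin.last n) (fillIn M A Z) ≤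
      empQuantile (1 - α) (fun j => S j (fillIn M A Z))}

/-!
Let `E j` be the event that the `j`-th score of the fully observed matrix `A` is at most the
empirical `(1-α)`-quantile of all `n+1` scores. Pointwise at least `⌈(1-α)(n+1)⌉` of the events
`E j` occur. Row-conditional symmetry turns a transposition of `j` and `n+1` into a relabelling
of the events, so exchangeability given `ξ` makes all conditional probabilities `P(E j | ξ)`
equal, whence `P(E (n+1) | ξ) ≥ 1 - α`. Filling in with `Z = A` shows that `E (n+1)` forces
`A_{n+1,n} ∈ ℐ_{n+1;n}`.

The coverage event is the projection of a Borel set, so it need not be measurable; it is analytic,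
hence null-measurable by Choquet's capacitability argument (inner approximation of a continuous
image of `ℕ → ℕ` by the compact images of the boxes `Iic σ`). Without this its conditional
probability would be the junk value `0`.
-/

namespace Tuple

variable {N : ℕ} {α : Type*} [LinearOrder α]

theorem lt_card_filter_le_sort_apply (x : Fin N → α) (m : Fin N) :
    (m : ℕ) < #{j | x j ≤ x (sort x m)} := by
  rw [Nat.lt_iff_add_one_le, ← Fin.card_Iic m, ← card_map (sort x).toEmbedding]
  refine card_le_card fun j hj => ?_
  obtain ⟨i, hi, rfl⟩ := mem_map.mp hj
  exact mem_filter.mpr ⟨mem_univ _, monotone_sort x (mem_Iic.mp hi)⟩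

theorem card_filter_lt_sort_apply_le (x : Fin N → α) (m : Fin N) :
    #{j | x j < x (sort x m)} ≤ m := by
  rw [← Fin.card_Iio m, ← card_map (s := Iio m) (sort x).toEmbedding]
  refine card_le_card fun j hj =>
    mem_map.mpr ⟨(sort x).symm j, mem_Iio.mpr ?_, (sort x).apply_symm_apply j⟩
  by_contra! hle
  have := monotone_sort x hle
  simp only [Function.comp_apply, Equiv.apply_symm_apply] at this
  exact (mem_filter.mp hj).2.not_ge this

theorem sort_apply_le_iff (x : Fin N → α) (m : Fin N) (c : α) :
    x (sort x m) ≤ c ↔ (m : ℕ) < #{j | x j ≤ c} := by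
  constructor
  · intro h
    exact (lt_card_filter_le_sort_apply x m).trans_le
      (card_le_card (monotone_filter_right univ fun j _ (hj : x j ≤ _) => hj.trans h))
  · intro h
    by_contra! hlt
    have hsub := monotone_filter_right univ fun j _ (hj : x j ≤ c) => hj.trans_lt hlt
    have := (card_le_card hsub).trans (card_filter_lt_sort_apply_le x m)
    omega

theorem measurable_sort_apply (m : Fin N) :
    Measurable fun x : Fin N → ℝ => x (sort x m) := by
  refine measurable_of_Iic fun c => ?_
  have hcount : Measurable fun x : Fin N → ℝ => #{j | x j ≤ c} := by
    simp only [card_filter]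
    exact measurable_sum _ fun j _ =>
      Measurable.ite (measurableSet_le (measurable_pi_apply j) measurable_const)
        measurable_const measurable_const
  convert hcount (measurableSet_Ioi (a := (m : ℕ))) using 1
  ext x
  exact sort_apply_le_iff x m c

end Tuple

section OrderStatistic

variable {N : ℕ} [NeZero N]

theorem orderStat_comp_perm (k : ℕ) (x : Fin N → ℝ) (σ : Equiv.Perm (Fin N)) :
    orderStat k (x ∘ σ) = orderStat k x :=
  congrFun (Tuple.comp_perm_comp_sort_eq_comp_sort (f := x) (σ := σ)) _

theorem le_card_filter_le_orderStat {k : ℕ} (hk : k ≤ N) (x : Fin N → ℝ) :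
    k ≤ #{j | x j ≤ orderStat k x} :=
  le_trans (by dsimp only; omega) (Tuple.lt_card_filter_le_sort_apply x _)

theorem measurable_orderStat (k : ℕ) : Measurable (orderStat k : (Fin N → ℝ) → ℝ) :=
  Tuple.measurable_sort_apply _

end OrderStatistic

section AnalyticSet

open Set Filter Topology Function

def prefixBounded (σ : ℕ → ℕ) (k : ℕ) : Set (ℕ → ℕ) := {x | ∀ i < k, x i ≤ σ i}

theorem prefixBounded_zero (σ : ℕ → ℕ) : prefixBounded σ 0 = univ := by
  simp [prefixBounded]

theorem prefixBounded_congr {σ τ : ℕ → ℕ} {k : ℕ} (h : ∀ i < k, σ i = τ i) :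
    prefixBounded σ k = prefixBounded τ k := by
  ext x
  exact forall₂_congr fun i hi => by rw [h i hi]

theorem antitone_prefixBounded (σ : ℕ → ℕ) : Antitone (prefixBounded σ) :=
  fun _ _ hkl _ hx i hi => hx i (hi.trans_le hkl)

theorem monotone_prefixBounded_update (σ : ℕ → ℕ) (k : ℕ) :
    Monotone fun N => prefixBounded (update σ k N) (k + 1) := by
  intro N N' hN x hx i hi
  rcases eq_or_ne i k with rfl | hik
  · simpa using (by simpa using hx i hi : x i ≤ N).trans hN
  · simpa [hik] using hx i hi

theorem iUnion_prefixBounded_update (σ : ℕ → ℕ) (k : ℕ) :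
    ⋃ N, prefixBounded (update σ k N) (k + 1) = prefixBounded σ k := by
  ext x
  simp only [mem_iUnion, prefixBounded, mem_ofPred_eq]
  constructor
  · rintro ⟨N, hN⟩ i hi
    simpa [hi.ne] using hN i (hi.trans k.lt_succ_self)
  · intro hx
    refine ⟨x k, fun i hi => ?_⟩
    rcases eq_or_ne i k with rfl | hik
    · simp
    · simpa [hik] using hx i (by omega)

variable {X : Type*} [MeasurableSpace X]

theorem exists_lt_measure_image_prefixBounded_update (μ : Measure X) (f : (ℕ → ℕ) → X)
    {c : ENNReal} {σ : ℕ → ℕ} {k : ℕ} (h : c < μ (f '' prefixBounded σ k)) :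
    ∃ N, c < μ (f '' prefixBounded (update σ k N) (k + 1)) := by
  have hmono : Monotone fun N => f '' prefixBounded (update σ k N) (k + 1) :=
    fun _ _ hN => image_mono (monotone_prefixBounded_update σ k hN)
  rwa [← iUnion_prefixBounded_update, image_iUnion, hmono.measure_iUnion, lt_iSup_iff] at h

theorem exists_forall_lt_measure_image_prefixBounded (μ : Measure X) (f : (ℕ → ℕ) → X)
    {c : ENNReal} (hc : c < μ (range f)) :
    ∃ σ : ℕ → ℕ, ∀ k, c < μ (f '' prefixBounded σ k) := by
  have hstep : ∀ (k : ℕ) (σ : ℕ → ℕ), ∃ N, c < μ (f '' prefixBounded σ k) →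
      c < μ (f '' prefixBounded (update σ k N) (k + 1)) := fun k σ => by
    by_cases h : c < μ (f '' prefixBounded σ k)
    · obtain ⟨N, hN⟩ := exists_lt_measure_image_prefixBounded_update μ f h
      exact ⟨N, fun _ => hN⟩
    · exact ⟨0, fun h' => absurd h' h⟩
  choose next hnext using hstep
  let seq : ℕ → ℕ → ℕ := fun k => Nat.rec 0 (fun k σ => update σ k (next k σ)) k
  have hseq : ∀ k, c < μ (f '' prefixBounded (seq k) k) := by
    intro k
    induction k with
    | zero => rwa [prefixBounded_zero, image_univ]
    | succ k ih => exact hnext k (seq k) ih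
  have hagree : ∀ k, ∀ i < k, seq k i = seq (i + 1) i := by
    intro k
    induction k with
    | zero => intro i hi; omega
    | succ k ih =>
      intro i hi
      rcases eq_or_ne i k with rfl | hik
      · rfl
      · change update (seq k) k _ i = _
        rw [update_of_ne hik]
        exact ih i (by omega)
  exact ⟨fun i => seq (i + 1) i, fun k => prefixBounded_congr (hagree k) ▸ hseq k⟩

theorem iInter_closure_image_prefixBounded_subset {Y : Type*} [MetricSpace Y]
    {f : (ℕ → ℕ) → Y} (hf : Continuous f) (σ : ℕ → ℕ) :
    ⋂ k, closure (f '' prefixBounded σ k) ⊆ f '' Iic σ := by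
  intro y hy
  have happrox : ∀ k : ℕ, ∃ x ∈ prefixBounded σ k, dist y (f x) < 1 / (k + 1) := fun k => by
    obtain ⟨_, ⟨x, hx, rfl⟩, hxy⟩ :=
      Metric.mem_closure_iff.mp (mem_iInter.mp hy k) _ Nat.one_div_pos_of_nat
    exact ⟨x, hx, hxy⟩
  choose x hx hxy using happrox
  -- truncating `x k` at `σ` changes only coordinates `≥ k`, and lands in the compact set `Iic σ`
  have hK : IsCompact (Iic σ) := Set.Icc_bot (a := σ) ▸ isCompact_Icc
  obtain ⟨z, hzσ, φ, hφ, htrunc⟩ :=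
    hK.tendsto_subseq (x := fun k => x k ⊓ σ) fun k => mem_Iic.mpr inf_le_right
  have hxz : Tendsto (fun j => x (φ j)) atTop (𝓝 z) := by
    refine tendsto_pi_nhds.mpr fun i => ((continuous_apply i).tendsto z |>.comp htrunc).congr' ?_
    filter_upwards [eventually_gt_atTop i] with j hj
    exact inf_of_le_left (hx (φ j) i (hj.trans_le hφ.le_apply))
  have hfy : Tendsto (fun j => f (x (φ j))) atTop (𝓝 y) := by
    refine tendsto_iff_dist_tendsto_zero.mpr (squeeze_zero (fun _ => dist_nonneg) (fun j => ?_)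
      (tendsto_one_div_add_atTop_nhds_zero_nat.comp hφ.tendsto_atTop))
    rw [dist_comm]
    exact (hxy (φ j)).le
  exact ⟨z, hzσ, tendsto_nhds_unique ((hf.tendsto z).comp hxz) hfy⟩

theorem exists_isCompact_subset_range_le_measure {Y : Type*} [MetricSpace Y] [MeasurableSpace Y]
    [OpensMeasurableSpace Y] (μ : Measure Y) [IsFiniteMeasure μ] {f : (ℕ → ℕ) → Y}
    (hf : Continuous f) {c : ENNReal} (hc : c < μ (range f)) :
    ∃ K, IsCompact K ∧ K ⊆ range f ∧ c ≤ μ K := by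
  obtain ⟨σ, hσ⟩ := exists_forall_lt_measure_image_prefixBounded μ f hc
  refine ⟨f '' Iic σ, (Set.Icc_bot (a := σ) ▸ isCompact_Icc : IsCompact (Iic σ)).image hf,
    image_subset_range _ _, ?_⟩
  calc c ≤ ⨅ k, μ (closure (f '' prefixBounded σ k)) :=
        le_iInf fun k => (hσ k).le.trans (measure_mono subset_closure)
    _ = μ (⋂ k, closure (f '' prefixBounded σ k)) :=
        (Antitone.measure_iInter (fun k l hkl => closure_mono (image_mono
          (antitone_prefixBounded σ hkl))) (fun k => isClosed_closure.nullMeasurableSet)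
          ⟨0, measure_ne_top μ _⟩).symm
    _ ≤ μ (f '' Iic σ) := measure_mono (iInter_closure_image_prefixBounded_subset hf σ)

theorem MeasureTheory.AnalyticSet.nullMeasurableSet {Y : Type*} [MetricSpace Y]
    [MeasurableSpace Y] [OpensMeasurableSpace Y] {s : Set Y} (hs : AnalyticSet s)
    (μ : Measure Y) [IsFiniteMeasure μ] : NullMeasurableSet s μ := by
  rw [AnalyticSet] at hs
  obtain rfl | ⟨f, hf, rfl⟩ := hs
  · exact nullMeasurableSet_empty
  rcases eq_or_ne (μ (range f)) 0 with h0 | h0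
  · exact NullMeasurableSet.of_null h0
  obtain ⟨u, -, hu, hlim⟩ := exists_seq_strictMono_tendsto' (pos_iff_ne_zero.mpr h0)
  choose K hKc hKf hμK using fun m => exists_isCompact_subset_range_le_measure μ hf (hu m).2
  have hKmeas : MeasurableSet (⋃ m, K m) := .iUnion fun m => (hKc m).isClosed.measurableSet
  have hle : μ (range f) ≤ μ (⋃ m, K m) :=
    le_of_tendsto' hlim fun m => (hμK m).trans (measure_mono (subset_iUnion K m))
  exact hKmeas.nullMeasurableSet.congr (ae_eq_of_subset_of_measure_ge (iUnion_subset hKf) hle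
    hKmeas.nullMeasurableSet (measure_ne_top μ _))

end AnalyticSet

section ConditionalProbability

variable {Ω : Type*} {mΩ : MeasurableSpace Ω} {P : Measure Ω} [IsFiniteMeasure P] {ξ : Ω → ℝ}

theorem condProb_preimage_ae_eq_of_map_eq {β : Type*} [MeasurableSpace β] {X Y : Ω → β}
    (hξ : Measurable ξ) (hX : Measurable X) (hY : Measurable Y)
    (hXY : P.map (fun ω => (ξ ω, X ω)) = P.map (fun ω => (ξ ω, Y ω))) {B : Set β}
    (hB : MeasurableSet B) :
    condProb P ξ (X ⁻¹' B) =ᵐ[P] condProb P ξ (Y ⁻¹' B) := by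
  have hint : ∀ {Z : Ω → β}, Measurable Z →
      Integrable ((Z ⁻¹' B).indicator fun _ => (1 : ℝ)) P :=
    fun hZ => (integrable_const 1).indicator (hZ hB)
  have hsetIntegral : ∀ {Z : Ω → β}, Measurable Z → ∀ {t : Set ℝ}, MeasurableSet t →
      ∫ ω in ξ ⁻¹' t, (Z ⁻¹' B).indicator (fun _ => (1 : ℝ)) ω ∂P
        = (P.map fun ω => (ξ ω, Z ω)).real (t ×ˢ B) := by
    intro Z hZ t ht
    rw [setIntegral_indicator (hZ hB), setIntegral_const, smul_eq_mul, mul_one,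
      map_measureReal_apply (hξ.prodMk hZ) (ht.prod hB)]
    rfl
  refine (ae_eq_condExp_of_forall_setIntegral_eq hξ.comap_le (hint hX)
    (fun s _ _ => integrable_condExp.integrableOn) ?_
    stronglyMeasurable_condExp.aestronglyMeasurable).symm
  rintro _ ⟨t, ht, rfl⟩ -
  rw [setIntegral_condExp hξ.comap_le (hint hY) ⟨t, ht, rfl⟩, hsetIntegral hY ht,
    hsetIntegral hX ht, hXY]

theorem condProb_mono_ae {s t : Set Ω} (hs : NullMeasurableSet s P) (ht : NullMeasurableSet t P)
    (hst : s ⊆ t) : condProb P ξ s ≤ᵐ[P] condProb P ξ t :=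
  condExp_mono ((integrable_const 1).indicator₀ hs) ((integrable_const 1).indicator₀ ht)
    (ae_of_all _ (Set.indicator_le_indicator_of_subset hst fun _ => zero_le_one))

end ConditionalProbability

theorem le_card_mul_condExp_of_le_sum {Ω ι : Type*} [Fintype ι] {m mΩ : MeasurableSpace Ω}
    {P : Measure Ω} [IsFiniteMeasure P] (hm : m ≤ mΩ) {f : ι → Ω → ℝ}
    (hf : ∀ i, Integrable (f i) P) {i₀ : ι} (heq : ∀ i, P[f i|m] =ᵐ[P] P[f i₀|m]) {c : ℝ}
    (hc : ∀ ω, c ≤ ∑ i, f i ω) :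
    ∀ᵐ ω ∂P, c ≤ Fintype.card ι * P[f i₀|m] ω := by
  have hmono := condExp_mono (m := m) (f := fun _ => c) (g := ∑ i, f i) (integrable_const c)
    (integrable_finsetSum' univ fun i _ => hf i)
    (ae_of_all _ fun ω => (hc ω).trans_eq (Finset.sum_apply ω univ f).symm)
  rw [condExp_const hm] at hmono
  filter_upwards [hmono, condExp_finsetSum (s := univ) (fun i _ => hf i) m, ae_all_iff.mpr heq]
    with ω hle hsum hi₀
  calc c ≤ (∑ i, P[f i|m]) ω := hle.trans_eq hsum
    _ = Fintype.card ι * P[f i₀|m] ω := by simp [Finset.sum_apply, hi₀]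

section FullConformal

variable {n : ℕ}

def RowConditionallySymmetric (S : Fin (n + 1) → Matrix (Fin (n + 2)) (Fin (n + 2)) ℝ → ℝ) :
    Prop :=
  ∀ (π : Equiv.Perm (Fin (n + 1))) (𝒜 : Matrix (Fin (n + 2)) (Fin (n + 2)) ℝ) (j : Fin (n + 1)),
    S j 𝒜 = S (π j) (matPerm π 𝒜)

def scoreLeQuantile (S : Fin (n + 1) → Matrix (Fin (n + 2)) (Fin (n + 2)) ℝ → ℝ) (β : ℝ)
    (j : Fin (n + 1)) : Set (Matrix (Fin (n + 2)) (Fin (n + 2)) ℝ) :=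
  {𝒜 | S j 𝒜 ≤ empQuantile β fun i => S i 𝒜}

variable {S : Fin (n + 1) → Matrix (Fin (n + 2)) (Fin (n + 2)) ℝ → ℝ}

theorem measurable_matPerm (π : Equiv.Perm (Fin (n + 1))) :
    Measurable (matPerm π : Matrix (Fin (n + 2)) (Fin (n + 2)) ℝ → _) := by
  unfold matPerm
  fun_prop

theorem measurable_fillIn (M : Matrix (Fin (n + 2)) (Fin (n + 2)) Bool) :
    Measurable fun p : (Fin (n + 2) → Fin (n + 2) → ℝ) × (Fin (n + 2) → Fin (n + 2) → ℝ) =>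
      (fillIn M p.1 p.2 : Fin (n + 2) → Fin (n + 2) → ℝ) := by
  refine measurable_pi_lambda _ fun i => measurable_pi_lambda _ fun j => ?_
  simp only [fillIn]
  split <;> fun_prop

theorem measurableSet_scoreLeQuantile (hS : ∀ j, Measurable (S j)) (β : ℝ) (j : Fin (n + 1)) :
    MeasurableSet (scoreLeQuantile S β j) :=
  measurableSet_le (hS j) ((measurable_orderStat _).comp (measurable_pi_lambda _ hS))

theorem RowConditionallySymmetric.apply_matPerm (hS : RowConditionallySymmetric S)
    (π : Equiv.Perm (Fin (n + 1))) (𝒜 : Matrix (Fin (n + 2)) (Fin (n + 2)) ℝ)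
    (j : Fin (n + 1)) : S j (matPerm π 𝒜) = S (π⁻¹ j) 𝒜 := by
  simpa using (hS π 𝒜 (π⁻¹ j)).symm

theorem RowConditionallySymmetric.matPerm_mem_scoreLeQuantile_iff
    (hS : RowConditionallySymmetric S) (π : Equiv.Perm (Fin (n + 1))) (β : ℝ)
    (j : Fin (n + 1)) (𝒜 : Matrix (Fin (n + 2)) (Fin (n + 2)) ℝ) :
    matPerm π 𝒜 ∈ scoreLeQuantile S β j ↔ 𝒜 ∈ scoreLeQuantile S β (π⁻¹ j) := by
  have hscores : (fun i => S i (matPerm π 𝒜)) = (fun i => S i 𝒜) ∘ ⇑π⁻¹ :=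
    funext (hS.apply_matPerm π 𝒜)
  change S j (matPerm π 𝒜) ≤ orderStat _ (fun i => S i (matPerm π 𝒜)) ↔
    S (π⁻¹ j) 𝒜 ≤ orderStat _ (fun i => S i 𝒜)
  rw [hscores, orderStat_comp_perm, hS.apply_matPerm]

theorem RowConditionallySymmetric.preimage_matPerm_swap_scoreLeQuantile
    (hS : RowConditionallySymmetric S) (β : ℝ) (j : Fin (n + 1)) :
    matPerm (Equiv.swap j (Fin.last n)) ⁻¹' scoreLeQuantile S β j =
      scoreLeQuantile S β (Fin.last n) := by
  ext 𝒜
  rw [Set.mem_preimage, hS.matPerm_mem_scoreLeQuantile_iff, Equiv.swap_inv,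
    Equiv.swap_apply_left]

theorem mul_le_sum_indicator_scoreLeQuantile {β : ℝ} (hβ : β ≤ 1)
    (𝒜 : Matrix (Fin (n + 2)) (Fin (n + 2)) ℝ) :
    β * (n + 1 : ℕ) ≤ ∑ j, (scoreLeQuantile S β j).indicator (fun _ => (1 : ℝ)) 𝒜 := by
  have hk : ⌈β * (n + 1 : ℕ)⌉₊ ≤ n + 1 := Nat.ceil_le.mpr (by nlinarith)
  calc β * (n + 1 : ℕ) ≤ ⌈β * (n + 1 : ℕ)⌉₊ := Nat.le_ceil _
    _ ≤ #{j | S j 𝒜 ≤ empQuantile β fun i => S i 𝒜} := by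
        exact_mod_cast le_card_filter_le_orderStat hk fun i => S i 𝒜
    _ = ∑ j, (scoreLeQuantile S β j).indicator (fun _ => (1 : ℝ)) 𝒜 := by
        rw [Finset.card_filter]
        push_cast
        rfl

theorem scoreLeQuantile_last_subset (α : ℝ) (M : Matrix (Fin (n + 2)) (Fin (n + 2)) Bool) :
    scoreLeQuantile S (1 - α) (Fin.last n) ⊆ {𝒜 | 𝒜 (rT n) (cT n) ∈ fullConfSet α M S 𝒜} := by
  intro 𝒜 h𝒜
  have hfill : fillIn M 𝒜 𝒜 = 𝒜 := by
    funext i j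
    simp [fillIn]
  exact ⟨𝒜, rfl, by rw [hfill]; exact h𝒜⟩

theorem analyticSet_setOf_mem_fullConfSet (hS : ∀ j, Measurable (S j)) (α : ℝ)
    (M : Matrix (Fin (n + 2)) (Fin (n + 2)) Bool) :
    AnalyticSet ({𝒜 | 𝒜 (rT n) (cT n) ∈ fullConfSet α M S 𝒜} :
      Set (Fin (n + 2) → Fin (n + 2) → ℝ)) := by
  let C : Set ((Fin (n + 2) → Fin (n + 2) → ℝ) × (Fin (n + 2) → Fin (n + 2) → ℝ)) :=
    {p | p.2 (rT n) (cT n) = p.1 (rT n) (cT n)} ∩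
      {p | fillIn M p.1 p.2 ∈ scoreLeQuantile S (1 - α) (Fin.last n)}
  have hC : MeasurableSet C := (measurableSet_eq_fun (by fun_prop) (by fun_prop)).inter
    (measurable_fillIn M (measurableSet_scoreLeQuantile hS _ _))
  convert hC.analyticSet.image_of_continuous continuous_fst
  ext 𝒜
  constructor
  · rintro ⟨Z, hZ, hle⟩
    exact ⟨(𝒜, Z), ⟨hZ, hle⟩, rfl⟩
  · rintro ⟨⟨_, Z⟩, ⟨hZ, hle⟩, rfl⟩
    exact ⟨Z, hZ, hle⟩

theorem nullMeasurableSet_setOf_mem_fullConfSet {Ω : Type*} [MeasurableSpace Ω] (P : Measure Ω)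
    [IsFiniteMeasure P] {A : Ω → Matrix (Fin (n + 2)) (Fin (n + 2)) ℝ} (hA : Measurable A)
    (hS : ∀ j, Measurable (S j)) (α : ℝ) (M : Matrix (Fin (n + 2)) (Fin (n + 2)) Bool) :
    NullMeasurableSet {ω | A ω (rT n) (cT n) ∈ fullConfSet α M S (A ω)} P := by
  let A' : Ω → Fin (n + 2) → Fin (n + 2) → ℝ := A
  have : IsFiniteMeasure (P.map A') := Measure.isFiniteMeasure_map P A'
  exact ((analyticSet_setOf_mem_fullConfSet hS α M).nullMeasurableSet (P.map A')).preimage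
    (hA.quasiMeasurePreserving P)

end FullConformal

theorem fullConformal_row_conditional_coverage_general
    {Ω : Type*} [MeasurableSpace Ω] (P : Measure Ω) [IsProbabilityMeasure P]
    (n : ℕ) (A : Ω → Matrix (Fin (n + 2)) (Fin (n + 2)) ℝ) (ξ : Ω → ℝ)
    (hA : Measurable A) (hξ : Measurable ξ)
    (M : Matrix (Fin (n + 2)) (Fin (n + 2)) Bool)
    (S : Fin (n + 1) → Matrix (Fin (n + 2)) (Fin (n + 2)) ℝ → ℝ)
    (hSmeas : ∀ j, Measurable (S j))
    (hsym : ∀ (π : Equiv.Perm (Fin (n + 1)))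
      (𝒜 : Matrix (Fin (n + 2)) (Fin (n + 2)) ℝ) (j : Fin (n + 1)),
      S j 𝒜 = S (π j) (matPerm π 𝒜))
    (hexch : ∀ π : Equiv.Perm (Fin (n + 1)),
      P.map (fun ω => (ξ ω, matPerm π (A ω))) = P.map (fun ω => (ξ ω, A ω)))
    (α : ℝ) (hα : α ∈ Set.Ioo (0 : ℝ) 1) :
    ∀ᵐ ω ∂P, 1 - α ≤
      condProb P ξ {ω' | A ω' (rT n) (cT n) ∈ fullConfSet α M S (A ω')} ω := by
  have hsym' : RowConditionallySymmetric S := hsym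
  let E : Fin (n + 1) → Set Ω := fun j => A ⁻¹' scoreLeQuantile S (1 - α) j
  have hE : ∀ j, MeasurableSet (E j) := fun j => hA (measurableSet_scoreLeQuantile hSmeas _ j)
  have hexchE : ∀ j, condProb P ξ (E j) =ᵐ[P] condProb P ξ (E (Fin.last n)) := fun j => by
    have h := condProb_preimage_ae_eq_of_map_eq hξ ((measurable_matPerm _).comp hA) hA
      (hexch (Equiv.swap j (Fin.last n))) (measurableSet_scoreLeQuantile hSmeas (1 - α) j)
    rw [Set.preimage_comp, hsym'.preimage_matPerm_swap_scoreLeQuantile] at h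
    exact h.symm
  have hlast := le_card_mul_condExp_of_le_sum hξ.comap_le
    (fun j => (integrable_const (1 : ℝ)).indicator (hE j)) hexchE
    fun ω => mul_le_sum_indicator_scoreLeQuantile (sub_le_self 1 hα.1.le) (A ω)
  filter_upwards [hlast, condProb_mono_ae (hE _).nullMeasurableSet
    (nullMeasurableSet_setOf_mem_fullConfSet P hA hSmeas α M)
    fun ω hω => scoreLeQuantile_last_subset α M hω] with ω hcover hmono
  rw [Fintype.card_fin, mul_comm] at hcover
  exact (le_of_mul_le_mul_left hcover (by positivity)).trans hmono

/-- row-conditional validity of full conformal matrix prediction: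
`P(A_{n+1,n} ∈ ℐ_{n+1;n} ∣ ξ_{n+1}) ≥ 1 - α` (almost everywhere, i.e. for a.e.
value `u` of `ξ_{n+1}`), under row-conditionally symmetric scores and
exchangeability of the first `n+1` row/column indices conditionally on `ξ_{n+1}`. -/
theorem fullConformal_row_conditional_coverage
    {Ω : Type*} [MeasurableSpace Ω] (P : Measure Ω) [IsProbabilityMeasure P]
    (n : ℕ) (A : Ω → Matrix (Fin (n + 2)) (Fin (n + 2)) ℝ) (ξ : Ω → ℝ)
    (hA : Measurable A) (hξ : Measurable ξ)
    (hAsym : ∀ ω i j, A ω i j = A ω j i)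
    (M : Matrix (Fin (n + 2)) (Fin (n + 2)) Bool)
    (hMsym : ∀ i j, M i j = M j i) (hMtarget : M (rT n) (cT n) = true)
    (S : Fin (n + 1) → Matrix (Fin (n + 2)) (Fin (n + 2)) ℝ → ℝ)
    (hSmeas : ∀ j, Measurable (S j))
    (hsym : ∀ (π : Equiv.Perm (Fin (n + 1)))
      (𝒜 : Matrix (Fin (n + 2)) (Fin (n + 2)) ℝ) (j : Fin (n + 1)),
      S j 𝒜 = S (π j) (matPerm π 𝒜))
    (hexch : ∀ π : Equiv.Perm (Fin (n + 1)),
      P.map (fun ω => (ξ ω, matPerm π (A ω))) = P.map (fun ω => (ξ ω, A ω)))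
    (α : ℝ) (hα : α ∈ Set.Ioo (0 : ℝ) 1) :
    ∀ᵐ ω ∂P, 1 - α ≤
      condProb P ξ {ω' | A ω' (rT n) (cT n) ∈ fullConfSet α M S (A ω')} ω :=
  fullConformal_row_conditional_coverage_general P n A ξ hA hξ M S hSmeas hsym hexch α hα
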